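/- Let W_1,...,W_n be finite-dimensional subspaces of a vector space with dim(W_i) ≤ α for all i, and suppose S_{i→j} ≤ W_i (1 ≤ i < j ≤ ℓ ≤ n) satisfy dim(S_{i→j}) ≤ β and h(W_j | Σ_{i<j} S_{i→j} + W_[j+1,n]) ≤ (d+1−n)β for all j ≤ ℓ, where n ≤ d+1. Let B = dim(W_[1,n]) and B_ℓ = (n−ℓ)α + C(ℓ,2)β + ℓ(d+1−n)β. Then for every integer v ≥ 0: C(v+2,2)·B ≤ (v+1)·B_ℓ + C(v+1,2)·nα − v·C(ℓ,2)·β, where C(m,2) = m(m−1)/2. (Theorem 3: the improved outer bound for linear exact-repair regenerating codes.) -/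

import Mathlib

/-!
Add virtual nodes `W_{n+u+1} = Σ_{i ≤ ℓ} W_i ∩ W_[i+1, n+u]`. Telescoping `dim W_[1,n]` along the
nodes gives, for every `u`, `B = Σ_{i ≤ n} h(W_i | W_[i+1, n+u]) + dim W_[n+1, n+u]`. The terms with
`i > ℓ` are at most `α`. For `j ≤ ℓ`, write `G_j = Σ_{i<j} S_{i→j}` and `R = W_[j+1, n+u]`; then
`h(W_j | R) = h(W_j | G_j + R) + h(G_j | R) - h(G_j | W_j + R)`, the first term is at most the
repair bound `(d+1-n)β`, and the correction telescopes in `u`: adding the `S_{k→j}` one at a time,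
`S_{k→j} ∩ (S_{k+1→j} + ⋯ + W_[j, n+u])` lies in `W_k ∩ W_[k+1, n+u] ⊆ W_{n+u+1}`. Summed over
`u ≤ v` the corrections cost only `dim G_j ≤ (j-1)β`, which yields the generalized outer bound
`(v+1)B ≤ (v+1)((n-ℓ)α + ℓ(d+1-n)β) + C(ℓ,2)β + Σ_{u ≤ v} dim W_[n+1, n+u]`. Finally each virtual
node absorbs the slack of the telescoping identity: `dim W_[n+1, n+u] ≤ u(nα - B)`.
-/

open Module Finset

/-- Conditional dimension: `h(A|B) = dim(A+B) - dim(B)`. -/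
noncomputable def condDim {F V : Type*} [Field F] [AddCommGroup V] [Module F V]
    (A B : Submodule F V) : ℤ :=
  (finrank F ↥(A ⊔ B) : ℤ) - (finrank F ↥B : ℤ)

section CondDim

variable {F V : Type*} [Field F] [AddCommGroup V] [Module F V]

theorem condDim_sup_left (A B C : Submodule F V) :
    condDim (A ⊔ B) C = condDim B C + condDim A (B ⊔ C) := by
  unfold condDim
  rw [sup_assoc]
  ring

theorem condDim_add_condDim_sup_comm (A B C : Submodule F V) :
    condDim B C + condDim A (B ⊔ C) = condDim A C + condDim B (A ⊔ C) := by
  rw [← condDim_sup_left, ← condDim_sup_left, sup_comm]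

theorem condDim_eq_finrank_sub_finrank_inf (A C : Submodule F V) [FiniteDimensional F A]
    [FiniteDimensional F C] : condDim A C = finrank F A - finrank F ↥(A ⊓ C) := by
  have := Submodule.finrank_sup_add_finrank_inf_eq A C
  unfold condDim
  omega

theorem condDim_le_finrank (A C : Submodule F V) [FiniteDimensional F A]
    [FiniteDimensional F C] : condDim A C ≤ finrank F A := by
  rw [condDim_eq_finrank_sub_finrank_inf]
  omega

theorem condDim_nonneg (A C : Submodule F V) [FiniteDimensional F ↥(A ⊔ C)] :
    0 ≤ condDim A C := by
  have := Submodule.finrank_mono (le_sup_right : C ≤ A ⊔ C)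
  unfold condDim
  omega

theorem condDim_le_condDim_of_inf_le {A C C' : Submodule F V} [FiniteDimensional F A]
    [FiniteDimensional F C] [FiniteDimensional F C'] (h : A ⊓ C ≤ C') :
    condDim A C' ≤ condDim A C := by
  have := Submodule.finrank_mono (le_inf inf_le_left h : A ⊓ C ≤ A ⊓ C')
  rw [condDim_eq_finrank_sub_finrank_inf, condDim_eq_finrank_sub_finrank_inf]
  omega

theorem finrank_finset_sup_le_sum {ι : Type*} (s : Finset ι) (f : ι → Submodule F V)
    [∀ i, FiniteDimensional F (f i)] : finrank F ↥(s.sup f) ≤ ∑ i ∈ s, finrank F (f i) := by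
  classical
  induction s using Finset.induction_on with
  | empty => simp
  | insert a s ha ih =>
    rw [sup_insert, sum_insert ha]
    exact (Submodule.finrank_add_le_finrank_add_finrank _ _).trans (by omega)

theorem finrank_Icc_sup_sup_eq_sum_condDim (W : ℕ → Submodule F V) (R : Submodule F V)
    {a n : ℕ} (ha : a ≤ n + 1) :
    (finrank F ↥((Icc a n).sup W ⊔ R) : ℤ) =
      ∑ i ∈ Icc a n, condDim (W i) ((Icc (i + 1) n).sup W ⊔ R) + finrank F R := by
  induction ha using Nat.decreasingInduction with
  | self => rw [Icc_eq_empty (by omega), sup_empty, bot_sup_eq, sum_empty, zero_add]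
  | of_succ a ha ih =>
    rw [← insert_Icc_add_one_left_eq_Icc (by omega : a ≤ n), sup_insert, sum_insert (by simp),
      sup_assoc, add_assoc, ← ih]
    unfold condDim
    ring

theorem condDim_Icc_sup_le_of_inf_le (A : ℕ → Submodule F V) [∀ k, FiniteDimensional F (A k)]
    {T T' : Submodule F V} [FiniteDimensional F T] [FiniteDimensional F T'] {a b : ℕ}
    (hab : a ≤ b + 1) (hA : ∀ k ∈ Icc a b, A k ⊓ ((Icc (k + 1) b).sup A ⊔ T) ≤ T') :
    condDim ((Icc a b).sup A) T' ≤ condDim ((Icc a b).sup A) T := by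
  induction hab using Nat.decreasingInduction with
  | self => rw [Icc_eq_empty (by omega), sup_empty, condDim, condDim, bot_sup_eq, bot_sup_eq,
      sub_self, sub_self]
  | of_succ a ha ih =>
    rw [← insert_Icc_add_one_left_eq_Icc (by omega : a ≤ b), sup_insert, condDim_sup_left,
      condDim_sup_left]
    have hrest := ih fun k hk => hA k (by simp only [mem_Icc] at hk ⊢; omega)
    have hfirst := condDim_le_condDim_of_inf_le
      ((hA a (by simp only [mem_Icc]; omega)).trans (le_sup_right (a := (Icc (a + 1) b).sup A)))
    omega

theorem sum_range_condDim_le {A G X : Submodule F V} {R : ℕ → Submodule F V}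
    [FiniteDimensional F A] [FiniteDimensional F G] [FiniteDimensional F X]
    [∀ u, FiniteDimensional F (R u)]
    (hR : ∀ u, condDim G (X ⊔ R (u + 1)) ≤ condDim G (A ⊔ (X ⊔ R u))) (v : ℕ) :
    ∑ u ∈ range (v + 1), condDim A (X ⊔ R u) ≤ (v + 1) * condDim A (G ⊔ X) + finrank F G := by
  have hterm : ∀ u, condDim A (X ⊔ R u) ≤
      condDim A (G ⊔ X) + (condDim G (X ⊔ R u) - condDim G (X ⊔ R (u + 1))) := by
    intro u
    have hswap := condDim_add_condDim_sup_comm A G (X ⊔ R u)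
    have hanti : condDim A (G ⊔ (X ⊔ R u)) ≤ condDim A (G ⊔ X) :=
      condDim_le_condDim_of_inf_le (inf_le_right.trans (sup_le le_sup_left
        (le_sup_left.trans le_sup_right)))
    linarith [hR u]
  calc ∑ u ∈ range (v + 1), condDim A (X ⊔ R u)
      ≤ ∑ u ∈ range (v + 1),
          (condDim A (G ⊔ X) + (condDim G (X ⊔ R u) - condDim G (X ⊔ R (u + 1)))) :=
        sum_le_sum fun u _ => hterm u
    _ = (v + 1) * condDim A (G ⊔ X) + (condDim G (X ⊔ R 0) - condDim G (X ⊔ R (v + 1))) := by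
        rw [sum_add_distrib, sum_range_sub']
        simp
    _ ≤ (v + 1) * condDim A (G ⊔ X) + finrank F G := by
        linarith [condDim_le_finrank G (X ⊔ R 0), condDim_nonneg G (X ⊔ R (v + 1))]

end CondDim

section VirtualNode

variable {F V : Type*} [Field F] [AddCommGroup V] [Module F V]

/-- `virtualNode W n ℓ u` is the paper's `W_{n+u}`; since the chain increases with `u`, it also
equals `W_[n+1, n+u]`, which is how the recursion writes `W_[i+1, n+u] = W_[i+1, n] + W_[n+1, n+u]`. -/
def virtualNode (W : ℕ → Submodule F V) (n ℓ : ℕ) : ℕ → Submodule F V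
  | 0 => ⊥
  | u + 1 => (Icc 1 ℓ).sup fun i => W i ⊓ ((Icc (i + 1) n).sup W ⊔ virtualNode W n ℓ u)

variable {W : ℕ → Submodule F V} {n ℓ : ℕ}

theorem virtualNode_zero : virtualNode W n ℓ 0 = ⊥ := rfl

instance [∀ i, FiniteDimensional F (W i)] :
    ∀ u, FiniteDimensional F (virtualNode W n ℓ u)
  | 0 => inferInstanceAs (FiniteDimensional F (⊥ : Submodule F V))
  | u + 1 => inferInstanceAs (FiniteDimensional F ↥((Icc 1 ℓ).sup
      fun i => W i ⊓ ((Icc (i + 1) n).sup W ⊔ virtualNode W n ℓ u) : Submodule F V))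

theorem virtualNode_le (hℓ : ℓ ≤ n) (u : ℕ) : virtualNode W n ℓ u ≤ (Icc 1 n).sup W := by
  cases u with
  | zero => exact bot_le
  | succ u => exact Finset.sup_le fun i hi =>
      inf_le_left.trans (le_sup (by simp only [mem_Icc] at hi ⊢; omega))

theorem inf_le_virtualNode_succ {i : ℕ} (hi : i ∈ Icc 1 ℓ) (u : ℕ) :
    W i ⊓ ((Icc (i + 1) n).sup W ⊔ virtualNode W n ℓ u) ≤ virtualNode W n ℓ (u + 1) :=
  le_sup (f := fun i => W i ⊓ ((Icc (i + 1) n).sup W ⊔ virtualNode W n ℓ u)) hi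

theorem finrank_eq_sum_condDim_add_finrank_virtualNode (hℓ : ℓ ≤ n) (u : ℕ) :
    (finrank F ↥((Icc 1 n).sup W) : ℤ) =
      ∑ i ∈ Icc 1 n, condDim (W i) ((Icc (i + 1) n).sup W ⊔ virtualNode W n ℓ u) +
        finrank F (virtualNode W n ℓ u) := by
  rw [← finrank_Icc_sup_sup_eq_sum_condDim W _ (by omega), sup_eq_left.mpr (virtualNode_le hℓ u)]

theorem finrank_virtualNode_succ_add_le [∀ i, FiniteDimensional F (W i)] (hℓ : ℓ ≤ n) (u : ℕ) :
    (finrank F (virtualNode W n ℓ (u + 1)) : ℤ) + finrank F ↥((Icc 1 n).sup W) ≤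
      ∑ i ∈ Icc 1 n, (finrank F (W i) : ℤ) + finrank F (virtualNode W n ℓ u) := by
  set h := fun i => condDim (W i) ((Icc (i + 1) n).sup W ⊔ virtualNode W n ℓ u)
  have hnext : (finrank F (virtualNode W n ℓ (u + 1)) : ℤ) ≤
      ∑ i ∈ Icc 1 ℓ, ((finrank F (W i) : ℤ) - h i) := by
    simp only [h, condDim_eq_finrank_sub_finrank_inf, sub_sub_cancel]
    exact_mod_cast finrank_finset_sup_le_sum _ _
  have hmono : ∑ i ∈ Icc 1 ℓ, ((finrank F (W i) : ℤ) - h i) ≤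
      ∑ i ∈ Icc 1 n, ((finrank F (W i) : ℤ) - h i) :=
    sum_le_sum_of_subset_of_nonneg (Icc_subset_Icc_right hℓ) fun i _ _ =>
      sub_nonneg.mpr (condDim_le_finrank _ _)
  have hbound := hnext.trans hmono
  rw [sum_sub_distrib] at hbound
  linarith [finrank_eq_sum_condDim_add_finrank_virtualNode (W := W) hℓ u]

variable {S : ℕ → ℕ → Submodule F V}

theorem repair_inf_le_virtualNode_succ (hℓ : ℓ ≤ n)
    (hSW : ∀ i j, 1 ≤ i → i < j → j ≤ ℓ → S i j ≤ W i) {j k : ℕ} (hj : j ≤ ℓ)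
    (hk : k ∈ Icc 1 (j - 1)) (u : ℕ) :
    S k j ⊓ ((Icc (k + 1) (j - 1)).sup (S · j) ⊔
        (W j ⊔ ((Icc (j + 1) n).sup W ⊔ virtualNode W n ℓ u))) ≤
      virtualNode W n ℓ (u + 1) := by
  rw [mem_Icc] at hk
  refine (inf_le_inf (hSW k j hk.1 (by omega) hj) ?_).trans
    (inf_le_virtualNode_succ (mem_Icc.mpr ⟨hk.1, by omega⟩) u)
  have hW : ∀ i, k < i → i ≤ n → W i ≤ (Icc (k + 1) n).sup W :=
    fun i h1 h2 => le_sup (mem_Icc.mpr ⟨h1, h2⟩)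
  refine sup_le (Finset.sup_le fun i hi => ?_) (sup_le ?_ (sup_le_sup_right ?_ _))
  · rw [mem_Icc] at hi
    exact (hSW i j (by omega) (by omega) hj).trans ((hW i (by omega) (by omega)).trans le_sup_left)
  · exact (hW j (by omega) (by omega)).trans le_sup_left
  · exact Finset.sup_mono (Icc_subset_Icc_left (by omega))

end VirtualNode

section OuterBound

theorem sum_range_natCast (m : ℕ) : ∑ i ∈ range m, (i : ℝ) = m * (m - 1) / 2 := by
  induction m with
  | zero => simp
  | succ m ih =>
    rw [sum_range_succ, ih]
    push_cast
    ring

theorem sum_Icc_one_natCast_sub_one (m : ℕ) : ∑ j ∈ Icc 1 m, ((j : ℝ) - 1) = m * (m - 1) / 2 := by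
  induction m with
  | zero => simp
  | succ m ih =>
    rw [sum_Icc_succ_top (by omega), ih]
    push_cast
    ring

variable {F V : Type*} [Field F] [AddCommGroup V] [Module F V] {W : ℕ → Submodule F V}
  {S : ℕ → ℕ → Submodule F V} {n ℓ : ℕ} {α β γ : ℝ}

theorem sum_finrank_virtualNode_le [∀ i, FiniteDimensional F (W i)] (hℓ : ℓ ≤ n)
    (hWα : ∀ i, 1 ≤ i → i ≤ n → (finrank F (W i) : ℝ) ≤ α) (v : ℕ) :
    ∑ u ∈ range (v + 1), (finrank F (virtualNode W n ℓ u) : ℝ) ≤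
      (v + 1) * v / 2 * (n * α - finrank F ↥((Icc 1 n).sup W)) := by
  have hsum : ∑ i ∈ Icc 1 n, (finrank F (W i) : ℝ) ≤ n * α := by
    simpa using sum_le_card_nsmul (Icc 1 n) _ α fun i hi => hWα i (mem_Icc.1 hi).1 (mem_Icc.1 hi).2
  have hnode : ∀ u, (finrank F (virtualNode W n ℓ u) : ℝ) ≤
      u * (n * α - finrank F ↥((Icc 1 n).sup W)) := by
    intro u
    induction u with
    | zero => rw [virtualNode_zero, finrank_bot]; simp
    | succ u ih =>
      have hstep : (finrank F (virtualNode W n ℓ (u + 1)) : ℝ) + finrank F ↥((Icc 1 n).sup W) ≤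
          ∑ i ∈ Icc 1 n, (finrank F (W i) : ℝ) + finrank F (virtualNode W n ℓ u) := by
        exact_mod_cast finrank_virtualNode_succ_add_le hℓ u
      push_cast
      linarith
  calc ∑ u ∈ range (v + 1), (finrank F (virtualNode W n ℓ u) : ℝ)
      ≤ ∑ u ∈ range (v + 1), (u : ℝ) * (n * α - finrank F ↥((Icc 1 n).sup W)) :=
        sum_le_sum fun u _ => hnode u
    _ = (v + 1) * v / 2 * (n * α - finrank F ↥((Icc 1 n).sup W)) := by
        rw [← sum_mul, sum_range_natCast]
        push_cast
        ring

theorem sum_condDim_virtualNode_le [∀ i, FiniteDimensional F (W i)]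
    [∀ i j, FiniteDimensional F (S i j)] (hℓ : ℓ ≤ n)
    (hSW : ∀ i j, 1 ≤ i → i < j → j ≤ ℓ → S i j ≤ W i)
    (hSβ : ∀ i j, 1 ≤ i → i < j → j ≤ ℓ → (finrank F ↥(S i j) : ℝ) ≤ β)
    (hrep : ∀ j, 1 ≤ j → j ≤ ℓ →
      (condDim (W j) ((Icc 1 (j - 1)).sup (S · j) ⊔ (Icc (j + 1) n).sup W) : ℝ) ≤ γ)
    {j : ℕ} (hj : j ∈ Icc 1 ℓ) (v : ℕ) :
    ∑ u ∈ range (v + 1), (condDim (W j) ((Icc (j + 1) n).sup W ⊔ virtualNode W n ℓ u) : ℝ) ≤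
      (v + 1) * γ + (j - 1) * β := by
  rw [mem_Icc] at hj
  have hG : (finrank F ↥((Icc 1 (j - 1)).sup (S · j)) : ℝ) ≤ (j - 1) * β :=
    calc (finrank F ↥((Icc 1 (j - 1)).sup (S · j)) : ℝ)
        ≤ ∑ i ∈ Icc 1 (j - 1), (finrank F ↥(S i j) : ℝ) := by
          exact_mod_cast finrank_finset_sup_le_sum _ _
      _ ≤ #(Icc 1 (j - 1)) • β :=
          sum_le_card_nsmul _ _ _ fun i hi => hSβ i j (mem_Icc.1 hi).1 (by grind) hj.2
      _ = (j - 1) * β := by simp [Nat.cast_sub hj.1]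
  have hsum : ∑ u ∈ range (v + 1),
      (condDim (W j) ((Icc (j + 1) n).sup W ⊔ virtualNode W n ℓ u) : ℝ) ≤
      (v + 1) * (condDim (W j) ((Icc 1 (j - 1)).sup (S · j) ⊔ (Icc (j + 1) n).sup W) : ℝ) +
        finrank F ↥((Icc 1 (j - 1)).sup (S · j)) := by
    exact_mod_cast sum_range_condDim_le (fun u => condDim_Icc_sup_le_of_inf_le _ (by omega)
      fun _ hk => (repair_inf_le_virtualNode_succ hℓ hSW hj.2 hk u).trans le_sup_right) v
  have hrep' := mul_le_mul_of_nonneg_left (hrep j hj.1 hj.2) (by positivity : (0 : ℝ) ≤ v + 1)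
  linarith

theorem generalized_outer_bound [∀ i, FiniteDimensional F (W i)]
    [∀ i j, FiniteDimensional F (S i j)] (hℓ : ℓ ≤ n)
    (hWα : ∀ i, 1 ≤ i → i ≤ n → (finrank F (W i) : ℝ) ≤ α)
    (hSW : ∀ i j, 1 ≤ i → i < j → j ≤ ℓ → S i j ≤ W i)
    (hSβ : ∀ i j, 1 ≤ i → i < j → j ≤ ℓ → (finrank F ↥(S i j) : ℝ) ≤ β)
    (hrep : ∀ j, 1 ≤ j → j ≤ ℓ →
      (condDim (W j) ((Icc 1 (j - 1)).sup (S · j) ⊔ (Icc (j + 1) n).sup W) : ℝ) ≤ γ)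
    (v : ℕ) :
    ((v : ℝ) + 1) * finrank F ↥((Icc 1 n).sup W) ≤
      (v + 1) * ((n - ℓ) * α + ℓ * γ) + ℓ * (ℓ - 1) / 2 * β +
        ∑ u ∈ range (v + 1), (finrank F (virtualNode W n ℓ u) : ℝ) := by
  set h : ℕ → ℕ → ℝ := fun i u => condDim (W i) ((Icc (i + 1) n).sup W ⊔ virtualNode W n ℓ u)
  have hsplit : ∀ u, (finrank F ↥((Icc 1 n).sup W) : ℝ) =
      ∑ i ∈ Icc 1 ℓ, h i u + ∑ i ∈ Icc (ℓ + 1) n, h i u + finrank F (virtualNode W n ℓ u) := by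
    intro u
    have hsum := sum_Ioc_consecutive (h · u) (Nat.zero_le ℓ) hℓ
    simp only [← Icc_add_one_left_eq_Ioc, zero_add] at hsum
    rw [hsum]
    simp only [h]
    exact_mod_cast finrank_eq_sum_condDim_add_finrank_virtualNode (W := W) hℓ u
  have hhead : ∑ i ∈ Icc 1 ℓ, ∑ u ∈ range (v + 1), h i u ≤
      (v + 1) * (ℓ * γ) + ℓ * (ℓ - 1) / 2 * β :=
    calc ∑ i ∈ Icc 1 ℓ, ∑ u ∈ range (v + 1), h i u
        ≤ ∑ j ∈ Icc 1 ℓ, ((v + 1) * γ + ((j : ℝ) - 1) * β) :=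
          sum_le_sum fun j hj => sum_condDim_virtualNode_le hℓ hSW hSβ hrep hj v
      _ = (v + 1) * (ℓ * γ) + ℓ * (ℓ - 1) / 2 * β := by
          rw [sum_add_distrib, ← sum_mul, ← sum_mul, sum_Icc_one_natCast_sub_one]
          simp
          ring
  have htail : ∀ u, ∑ i ∈ Icc (ℓ + 1) n, h i u ≤ (n - ℓ) * α := by
    intro u
    calc ∑ i ∈ Icc (ℓ + 1) n, h i u ≤ #(Icc (ℓ + 1) n) • α :=
          sum_le_card_nsmul _ _ _ fun i hi => by
            rw [mem_Icc] at hi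
            exact (Int.cast_le.mpr (condDim_le_finrank _ _)).trans (hWα i (by omega) hi.2)
      _ = (n - ℓ) * α := by simp [Nat.cast_sub hℓ]
  calc ((v : ℝ) + 1) * finrank F ↥((Icc 1 n).sup W)
      = ∑ u ∈ range (v + 1), (∑ i ∈ Icc 1 ℓ, h i u + ∑ i ∈ Icc (ℓ + 1) n, h i u +
          finrank F (virtualNode W n ℓ u)) := by
        rw [← sum_congr rfl fun u _ => hsplit u]
        simp
    _ = ∑ i ∈ Icc 1 ℓ, ∑ u ∈ range (v + 1), h i u +
          ∑ u ∈ range (v + 1), ∑ i ∈ Icc (ℓ + 1) n, h i u +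
          ∑ u ∈ range (v + 1), (finrank F (virtualNode W n ℓ u) : ℝ) := by
        rw [sum_add_distrib, sum_add_distrib, sum_comm]
    _ ≤ (v + 1) * (ℓ * γ) + ℓ * (ℓ - 1) / 2 * β + ∑ u ∈ range (v + 1), (n - ℓ) * α +
          ∑ u ∈ range (v + 1), (finrank F (virtualNode W n ℓ u) : ℝ) := by
        gcongr with u
        exact htail u
    _ = (v + 1) * ((n - ℓ) * α + ℓ * γ) + ℓ * (ℓ - 1) / 2 * β +
          ∑ u ∈ range (v + 1), (finrank F (virtualNode W n ℓ u) : ℝ) := by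
        simp
        ring

end OuterBound

theorem stmt12_general {F V : Type*} [Field F] [AddCommGroup V] [Module F V]
    (W : ℕ → Submodule F V) (S : ℕ → ℕ → Submodule F V)
    (hfdW : ∀ i, FiniteDimensional F ↥(W i)) (hfdS : ∀ i j, FiniteDimensional F ↥(S i j))
    (n ℓ d : ℕ) (hln : ℓ ≤ n)
    (α β : ℝ)
    (hWα : ∀ i, 1 ≤ i → i ≤ n → (finrank F ↥(W i) : ℝ) ≤ α)
    (hSW : ∀ i j, 1 ≤ i → i < j → j ≤ ℓ → S i j ≤ W i)
    (hSβ : ∀ i j, 1 ≤ i → i < j → j ≤ ℓ → (finrank F ↥(S i j) : ℝ) ≤ β)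
    (hrep : ∀ j, 1 ≤ j → j ≤ ℓ →
      ((condDim (W j) (((Finset.Icc 1 (j-1)).sup (fun i => S i j))
          ⊔ (Finset.Icc (j+1) n).sup W) : ℤ) : ℝ)
        ≤ ((d : ℝ) + 1 - (n : ℝ)) * β) :
    ∀ v : ℕ,
      ((v : ℝ) + 2) * ((v : ℝ) + 1) / 2 * (finrank F ↥((Finset.Icc 1 n).sup W) : ℝ)
      ≤ ((v : ℝ) + 1) * (((n : ℝ) - (ℓ : ℝ)) * α + (ℓ : ℝ) * ((ℓ : ℝ) - 1) / 2 * β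
            + (ℓ : ℝ) * ((d : ℝ) + 1 - (n : ℝ)) * β)
        + ((v : ℝ) + 1) * (v : ℝ) / 2 * ((n : ℝ) * α)
        - (v : ℝ) * ((ℓ : ℝ) * ((ℓ : ℝ) - 1) / 2) * β := by
  intro v
  have := hfdW
  have := hfdS
  have houter := generalized_outer_bound hln hWα hSW hSβ hrep v
  have hnodes := sum_finrank_virtualNode_le (ℓ := ℓ) hln hWα v
  linarith

/-- Theorem 3: improved outer bound for linear exact-repair codes:
`C(v+2,2)·B ≤ (v+1)·B_ℓ + C(v+1,2)·nα − v·C(ℓ,2)·β`. -/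
theorem stmt12 {F V : Type*} [Field F] [AddCommGroup V] [Module F V]
    (W : ℕ → Submodule F V) (S : ℕ → ℕ → Submodule F V)
    (hfdW : ∀ i, FiniteDimensional F ↥(W i)) (hfdS : ∀ i j, FiniteDimensional F ↥(S i j))
    (n ℓ d : ℕ) (hln : ℓ ≤ n) (hnd : n ≤ d + 1)
    (α β : ℝ) (hα : 0 ≤ α) (hβ : 0 ≤ β)
    (hWα : ∀ i, 1 ≤ i → i ≤ n → (finrank F ↥(W i) : ℝ) ≤ α)
    (hSW : ∀ i j, 1 ≤ i → i < j → j ≤ ℓ → S i j ≤ W i)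
    (hSβ : ∀ i j, 1 ≤ i → i < j → j ≤ ℓ → (finrank F ↥(S i j) : ℝ) ≤ β)
    (hrep : ∀ j, 1 ≤ j → j ≤ ℓ →
      ((condDim (W j) (((Finset.Icc 1 (j-1)).sup (fun i => S i j))
          ⊔ (Finset.Icc (j+1) n).sup W) : ℤ) : ℝ)
        ≤ ((d : ℝ) + 1 - (n : ℝ)) * β) :
    ∀ v : ℕ,
      ((v : ℝ) + 2) * ((v : ℝ) + 1) / 2 * (finrank F ↥((Finset.Icc 1 n).sup W) : ℝ)
      ≤ ((v : ℝ) + 1) * (((n : ℝ) - (ℓ : ℝ)) * α + (ℓ : ℝ) * ((ℓ : ℝ) - 1) / 2 * β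
            + (ℓ : ℝ) * ((d : ℝ) + 1 - (n : ℝ)) * β)
        + ((v : ℝ) + 1) * (v : ℝ) / 2 * ((n : ℝ) * α)
        - (v : ℝ) * ((ℓ : ℝ) * ((ℓ : ℝ) - 1) / 2) * β :=
  stmt12_general W S hfdW hfdS n ℓ d hln α β hWα hSW hSβ hrep
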